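/- arXiv:2407.19972 — 3 statements merged into one kernel-verified Lean document; each statement's English description precedes it below -/
import Mathlib

section
/- Carleman estimate: there is the following inequality. For every λ > 0, every τ̂ > 0, and every radial function f ∈ C_c^∞(ℝ⁴ \ {0}), one has 2τ̂√λ · ‖R^λ f‖_{L²(R³dR)} ≤ ‖R^{1+λ}(Δ + τ̂²)f‖_{L²(R³dR)}, where Δf = f'' + (3/R)f' is the radial Laplacian on ℝ⁴ and ‖g‖²_{L²(R³dR)} = ∫₀^∞ |g(R)|² R³ dR. -/
open Real Set MeasureTheory
open scoped ContDiff

namespace CarlemanAux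

noncomputable def G (lam : ℝ) (f : ℝ → ℝ) (R : ℝ) : ℝ := R ^ (lam+1) * f R
noncomputable def G1 (lam : ℝ) (f : ℝ → ℝ) (R : ℝ) : ℝ :=
  (lam+1) * (R ^ (lam+1) * f R) + R ^ (lam+2) * deriv f R
noncomputable def dG (lam : ℝ) (f : ℝ → ℝ) (R : ℝ) : ℝ :=
  (lam+1) * R ^ lam * f R + R ^ (lam+1) * deriv f R
noncomputable def dG1 (lam : ℝ) (f : ℝ → ℝ) (R : ℝ) : ℝ :=
  (lam+1) * ((lam+1) * R ^ lam * f R + R ^ (lam+1) * deriv f R)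
    + ((lam+2) * R ^ (lam+1) * deriv f R + R ^ (lam+2) * deriv (deriv f) R)
noncomputable def S (lam tauh : ℝ) (f : ℝ → ℝ) (R : ℝ) : ℝ :=
  R * dG1 lam f R + (lam^2-1) * G lam f R + tauh^2 * R^2 * G lam f R
noncomputable def B (lam tauh : ℝ) (f : ℝ → ℝ) (R : ℝ) : ℝ :=
  -2*lam*((G1 lam f R)^2 + (lam^2-1)*(G lam f R)^2 + tauh^2*(R^2*(G lam f R)^2))
noncomputable def dB (lam tauh : ℝ) (f : ℝ → ℝ) (R : ℝ) : ℝ :=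
  -2*lam*(2*G1 lam f R*dG1 lam f R + (lam^2-1)*(2*G lam f R*dG lam f R)
    + tauh^2*(2*R*(G lam f R)^2 + R^2*(2*G lam f R*dG lam f R)))

/-- The key pointwise Carleman identity. -/
lemma key_identity (lam tauh : ℝ) (f : ℝ → ℝ) {R : ℝ} (hR : 0 < R) :
    (R ^ (1+lam) * (deriv (deriv f) R + (3/R) * deriv f R + tauh^2 * f R))^2 * R^3
      = 4*lam*tauh^2*((R ^ lam * f R)^2 * R^3)
        + ((S lam tauh f R)^2 + 4*lam^2*(G1 lam f R)^2)/R + dB lam tauh f R := by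
  have hR0 : R ≠ 0 := hR.ne'
  simp only [G, G1, dG, dG1, S, dB]
  rw [show (1+lam) = lam+1 by ring]
  rw [Real.rpow_add hR lam 1, Real.rpow_add hR lam 2, Real.rpow_one]
  rw [show ((2:ℝ)) = ((2:ℕ):ℝ) by norm_num, Real.rpow_natCast]
  field_simp
  ring

variable {lam tauh : ℝ} {f : ℝ → ℝ}

lemma hasDerivAt_G (hfd : Differentiable ℝ f) {R : ℝ} (hR : 0 < R) :
    HasDerivAt (G lam f) (dG lam f R) R := by
  have h := (Real.hasDerivAt_rpow_const (x := R) (p := lam+1)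
    (Or.inl hR.ne')).mul (hfd R).hasDerivAt
  refine h.congr_deriv ?_
  simp only [dG]
  rw [show lam+1-1 = lam by ring]

lemma hasDerivAt_G1 (hfd : Differentiable ℝ f) (hf'd : Differentiable ℝ (deriv f))
    {R : ℝ} (hR : 0 < R) : HasDerivAt (G1 lam f) (dG1 lam f R) R := by
  have h1 := ((Real.hasDerivAt_rpow_const (x := R) (p := lam+1)
    (Or.inl hR.ne')).mul (hfd R).hasDerivAt).const_mul (lam+1)
  have h2 := (Real.hasDerivAt_rpow_const (x := R) (p := lam+2)
    (Or.inl hR.ne')).mul (hf'd R).hasDerivAt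
  have h := h1.add h2
  refine h.congr_deriv ?_
  simp only [dG1]
  rw [show lam+1-1 = lam by ring, show lam+2-1 = lam+1 by ring]

lemma hasDerivAt_B (hfd : Differentiable ℝ f) (hf'd : Differentiable ℝ (deriv f))
    {R : ℝ} (hR : 0 < R) : HasDerivAt (B lam tauh f) (dB lam tauh f R) R := by
  have hg := hasDerivAt_G (lam := lam) hfd hR
  have hg1 := hasDerivAt_G1 (lam := lam) hfd hf'd hR
  have h := (((hg1.pow 2).add ((hg.pow 2).const_mul (lam^2-1))).add
    (((hasDerivAt_pow 2 R).mul (hg.pow 2)).const_mul (tauh^2))).const_mul (-2*lam)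
  refine h.congr_deriv ?_
  simp only [dB, Pi.pow_apply]
  push_cast
  ring

/-- A function continuous on `(0,∞)` and vanishing outside `[ε,M] ⊆ (0,∞)` is integrable. -/
lemma integrable_aux {h : ℝ → ℝ} {ε M : ℝ} (hε : 0 < ε)
    (hcont : ContinuousOn h (Ioi 0)) (hvan : ∀ x ∉ Icc ε M, h x = 0) :
    Integrable h := by
  have hc : Continuous h := by
    rw [continuous_iff_continuousAt]
    intro x
    rcases lt_or_ge 0 x with hx | hx
    · exact hcont.continuousAt (isOpen_Ioi.mem_nhds hx)
    · have he : h =ᶠ[nhds x] fun _ => (0:ℝ) := by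
        filter_upwards [Iio_mem_nhds (lt_of_le_of_lt hx hε)] with y hy
        exact hvan y (fun hy' => absurd hy'.1 (not_le.mpr hy))
      exact he.continuousAt
  have hcs : HasCompactSupport h := HasCompactSupport.intro isCompact_Icc hvan
  exact hc.integrable_of_hasCompactSupport hcs

end CarlemanAux

open CarlemanAux

/-- Carleman estimate with power weights for the radial operator `Δ + τ̂²` on `ℝ⁴`:
for every `λ > 0`, `τ̂ > 0` and every smooth radial `f` compactly supported away from
the origin, `2τ̂√λ‖R^λ f‖_{L²(R³dR)} ≤ ‖R^{1+λ}(Δ + τ̂²)f‖_{L²(R³dR)}`. -/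
theorem carleman_estimate (lam tauh : ℝ) (hlam : 0 < lam) (htauh : 0 < tauh)
    (f : ℝ → ℝ) (hf : ContDiff ℝ (⊤ : ℕ∞) f) (hfc : HasCompactSupport f)
    (hfs : tsupport f ⊆ Set.Ioi 0) :
    2 * tauh * Real.sqrt lam *
        Real.sqrt (∫ R in Set.Ioi (0 : ℝ), (R ^ lam * f R) ^ 2 * R ^ 3)
      ≤ Real.sqrt (∫ R in Set.Ioi (0 : ℝ),
          (R ^ (1 + lam) *
            (deriv (deriv f) R + (3 / R) * deriv f R + tauh ^ 2 * f R)) ^ 2 * R ^ 3) := by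
  -- smoothness facts
  have hfd : Differentiable ℝ f := hf.differentiable (by simp)
  have hf2 : ContDiff ℝ ∞ (deriv f) := (contDiff_infty_iff_deriv.mp (hf.of_le (by simp))).2
  have hf'd : Differentiable ℝ (deriv f) := (contDiff_infty_iff_deriv.mp hf2).1
  have hcf : Continuous f := hf.continuous
  have hcf' : Continuous (deriv f) := hf2.continuous
  have hcf'' : Continuous (deriv (deriv f)) := (contDiff_infty_iff_deriv.mp hf2).2.continuous
  -- support bounds
  set K : Set ℝ := tsupport f ∪ Icc 1 2 with hK
  have hKc : IsCompact K := hfc.union isCompact_Icc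
  have hKne : K.Nonempty := ⟨1, Or.inr ⟨le_rfl, one_le_two⟩⟩
  have hKsub : K ⊆ Ioi 0 := union_subset hfs (fun x hx => lt_of_lt_of_le one_pos hx.1)
  set ε : ℝ := sInf K with hεdef
  set M : ℝ := sSup K with hMdef
  have hε : (0:ℝ) < ε := hKsub (hKc.sInf_mem hKne)
  have hKIcc : tsupport f ⊆ Icc ε M := fun x hx =>
    ⟨csInf_le hKc.bddBelow (Or.inl hx), le_csSup hKc.bddAbove (Or.inl hx)⟩
  -- vanishing of f and its derivatives outside [ε, M]
  have hvan : ∀ x ∉ Icc ε M, f x = 0 ∧ deriv f x = 0 ∧ deriv (deriv f) x = 0 := by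
    intro x hx
    have hxK : x ∉ tsupport f := fun h => hx (hKIcc h)
    refine ⟨image_eq_zero_of_notMem_tsupport hxK, ?_, ?_⟩
    · by_contra h
      exact hxK (support_deriv_subset (by simpa [Function.mem_support] using h))
    · by_contra h
      have h1 : x ∈ tsupport (deriv f) :=
        support_deriv_subset (by simpa [Function.mem_support] using h)
      exact hxK (closure_minimal support_deriv_subset (isClosed_tsupport f) h1)
  -- vanishing of auxiliary functions
  have hvG : ∀ x ∉ Icc ε M, G lam f x = 0 := fun x hx => by
    simp [G, (hvan x hx).1]
  have hvG1 : ∀ x ∉ Icc ε M, G1 lam f x = 0 := fun x hx => by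
    simp [G1, (hvan x hx).1, (hvan x hx).2.1]
  have hvdG : ∀ x ∉ Icc ε M, dG lam f x = 0 := fun x hx => by
    simp [dG, (hvan x hx).1, (hvan x hx).2.1]
  have hvdG1 : ∀ x ∉ Icc ε M, dG1 lam f x = 0 := fun x hx => by
    simp [dG1, (hvan x hx).1, (hvan x hx).2.1, (hvan x hx).2.2]
  have hvS : ∀ x ∉ Icc ε M, S lam tauh f x = 0 := fun x hx => by
    simp [S, hvG x hx, hvdG1 x hx]
  have hvB : ∀ x ∉ Icc ε M, B lam tauh f x = 0 := fun x hx => by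
    simp [B, hvG x hx, hvG1 x hx]
  have hvdB : ∀ x ∉ Icc ε M, dB lam tauh f x = 0 := fun x hx => by
    simp [dB, hvG x hx, hvG1 x hx, hvdG x hx, hvdG1 x hx]
  -- continuity on (0, ∞)
  have hrp : ∀ p : ℝ, ContinuousOn (fun x : ℝ => x ^ p) (Ioi 0) :=
    fun p => ContinuousOn.rpow_const continuousOn_id (fun x hx => Or.inl (ne_of_gt hx))
  have hcG : ContinuousOn (G lam f) (Ioi 0) := (hrp _).mul hcf.continuousOn
  have hcG1 : ContinuousOn (G1 lam f) (Ioi 0) :=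
    (((hrp _).mul hcf.continuousOn).const_smul (lam+1)).add ((hrp _).mul hcf'.continuousOn)
  have hcdG : ContinuousOn (dG lam f) (Ioi 0) :=
    (((hrp _).const_smul (lam+1)).mul hcf.continuousOn).add ((hrp _).mul hcf'.continuousOn)
  have hcdG1 : ContinuousOn (dG1 lam f) (Ioi 0) :=
    (((((hrp _).const_smul (lam+1)).mul hcf.continuousOn).add
      ((hrp _).mul hcf'.continuousOn)).const_smul (lam+1)).add
      ((((hrp _).const_smul (lam+2)).mul hcf'.continuousOn).add
        ((hrp _).mul hcf''.continuousOn))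
  have hcS : ContinuousOn (S lam tauh f) (Ioi 0) :=
    ((continuousOn_id.mul hcdG1).add (hcG.const_smul (lam^2-1))).add
      ((continuous_const.continuousOn.mul (continuous_pow 2).continuousOn).mul hcG)
  -- the three integrands
  have hint2 : Integrable (fun R => (R ^ lam * f R) ^ 2 * R ^ 3) := by
    refine integrable_aux (M := M) hε ((((hrp lam).mul hcf.continuousOn).pow 2).mul
      (continuous_pow 3).continuousOn) ?_
    intro x hx; simp [(hvan x hx).1]
  have hint3 : Integrable (fun R => ((S lam tauh f R)^2 + 4*lam^2*(G1 lam f R)^2)/R) := by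
    refine integrable_aux (M := M) hε (ContinuousOn.div ((hcS.pow 2).add
      ((hcG1.pow 2).const_smul (4*lam^2))) continuousOn_id (fun x hx => ne_of_gt hx)) ?_
    intro x hx; simp [hvS x hx, hvG1 x hx]
  have hint4 : Integrable (dB lam tauh f) := by
    refine integrable_aux (M := M) hε ?_ hvdB
    exact ((((continuous_const.continuousOn.mul hcG1).mul hcdG1).add
      (((continuous_const.continuousOn.mul hcG).mul hcdG).const_smul (lam^2-1))).add
      ((((continuous_const.continuousOn.mul continuousOn_id).mul (hcG.pow 2)).add
        ((continuous_pow 2).continuousOn.mul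
          ((continuous_const.continuousOn.mul hcG).mul hcdG))).const_smul (tauh^2))).const_smul
      (-2*lam)
  -- B is differentiable everywhere with derivative dB
  have hBderiv : ∀ x : ℝ, HasDerivAt (B lam tauh f) (dB lam tauh f x) x := by
    intro x
    rcases lt_or_ge 0 x with hx | hx
    · exact hasDerivAt_B hfd hf'd hx
    · have he : B lam tauh f =ᶠ[nhds x] fun _ => (0:ℝ) := by
        filter_upwards [Iio_mem_nhds (lt_of_le_of_lt hx hε)] with y hy
        exact hvB y (fun hy' => absurd hy'.1 (not_le.mpr hy))
      have h0 : HasDerivAt (B lam tauh f) 0 x :=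
        he.hasDerivAt_iff.mpr (hasDerivAt_const x 0)
      have : dB lam tauh f x = 0 :=
        hvdB x (fun hx' => absurd hx'.1 (not_le.mpr (lt_of_le_of_lt hx hε)))
      rw [this]; exact h0
  -- ∫ dB over (0,∞) is zero
  have hdBzero : ∫ x in Ioi (0:ℝ), dB lam tauh f x = 0 := by
    have hnotin : ∀ x : ℝ, x ≤ 0 → x ∉ Icc ε M := fun x hx hx' =>
      absurd hx'.1 (not_le.mpr (lt_of_le_of_lt hx hε))
    have e0 : ∫ x in Ioi (0:ℝ), dB lam tauh f x = ∫ x, dB lam tauh f x :=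
      setIntegral_eq_integral_of_forall_compl_eq_zero
        (fun x hx => hvdB x (hnotin x (not_lt.mp hx)))
    rw [e0]
    have hsupp : Function.support (dB lam tauh f) ⊆ Ioc 0 (M+1) := by
      intro x hx
      by_contra hxn
      rcases not_and_or.mp ((mem_Ioc (a := (0:ℝ))).not.mp hxn) with h | h
      · exact hx (hvdB x (hnotin x (not_lt.mp h)))
      · exact hx (hvdB x (fun hx' => absurd hx'.2 (by push_neg at h ⊢; linarith)))
    rw [← intervalIntegral.integral_eq_integral_of_support_subset hsupp]
    rw [intervalIntegral.integral_eq_sub_of_hasDerivAt (fun x _ => hBderiv x)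
      hint4.intervalIntegrable]
    have hB1 : B lam tauh f (M+1) = 0 := hvB _ (fun hx' => absurd hx'.2 (by linarith))
    have hB0 : B lam tauh f 0 = 0 := hvB _ (hnotin 0 le_rfl)
    rw [hB1, hB0, sub_zero]
  -- the main integral inequality
  have hI2 : 0 ≤ ∫ R in Ioi (0:ℝ), (R ^ lam * f R) ^ 2 * R ^ 3 :=
    setIntegral_nonneg measurableSet_Ioi (fun R hR =>
      mul_nonneg (sq_nonneg _) (pow_nonneg (le_of_lt hR) 3))
  have key : 4*lam*tauh^2 * ∫ R in Ioi (0:ℝ), (R ^ lam * f R) ^ 2 * R ^ 3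
      ≤ ∫ R in Ioi (0:ℝ),
          (R ^ (1 + lam) *
            (deriv (deriv f) R + (3 / R) * deriv f R + tauh ^ 2 * f R)) ^ 2 * R ^ 3 := by
    have hcongr : ∫ R in Ioi (0:ℝ),
        (R ^ (1 + lam) *
          (deriv (deriv f) R + (3 / R) * deriv f R + tauh ^ 2 * f R)) ^ 2 * R ^ 3
        = ∫ R in Ioi (0:ℝ), (4*lam*tauh^2*((R ^ lam * f R)^2 * R^3)
            + ((S lam tauh f R)^2 + 4*lam^2*(G1 lam f R)^2)/R + dB lam tauh f R) :=
      setIntegral_congr_fun measurableSet_Ioi (fun R hR => key_identity lam tauh f hR)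
    have hsplit : ∫ R in Ioi (0:ℝ), (4*lam*tauh^2*((R ^ lam * f R)^2 * R^3)
            + ((S lam tauh f R)^2 + 4*lam^2*(G1 lam f R)^2)/R + dB lam tauh f R)
        = 4*lam*tauh^2*(∫ R in Ioi (0:ℝ), (R ^ lam * f R)^2 * R^3)
          + (∫ R in Ioi (0:ℝ), ((S lam tauh f R)^2 + 4*lam^2*(G1 lam f R)^2)/R)
          + ∫ R in Ioi (0:ℝ), dB lam tauh f R := by
      have e1 : ∫ R in Ioi (0:ℝ), (4*lam*tauh^2*((R ^ lam * f R)^2 * R^3)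
            + ((S lam tauh f R)^2 + 4*lam^2*(G1 lam f R)^2)/R + dB lam tauh f R)
          = (∫ R in Ioi (0:ℝ), (4*lam*tauh^2*((R ^ lam * f R)^2 * R^3)
              + ((S lam tauh f R)^2 + 4*lam^2*(G1 lam f R)^2)/R))
            + ∫ R in Ioi (0:ℝ), dB lam tauh f R :=
        integral_add (((hint2.const_mul _).add hint3).integrableOn) hint4.integrableOn
      have e2 : ∫ R in Ioi (0:ℝ), (4*lam*tauh^2*((R ^ lam * f R)^2 * R^3)
            + ((S lam tauh f R)^2 + 4*lam^2*(G1 lam f R)^2)/R)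
          = (∫ R in Ioi (0:ℝ), 4*lam*tauh^2*((R ^ lam * f R)^2 * R^3))
            + ∫ R in Ioi (0:ℝ), ((S lam tauh f R)^2 + 4*lam^2*(G1 lam f R)^2)/R :=
        integral_add (hint2.const_mul _).integrableOn hint3.integrableOn
      have e3 : ∫ R in Ioi (0:ℝ), 4*lam*tauh^2*((R ^ lam * f R)^2 * R^3)
          = 4*lam*tauh^2 * ∫ R in Ioi (0:ℝ), (R ^ lam * f R)^2 * R^3 :=
        integral_const_mul _ _
      rw [e1, e2, e3]
    have h3nonneg : 0 ≤ ∫ R in Ioi (0:ℝ),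
        ((S lam tauh f R)^2 + 4*lam^2*(G1 lam f R)^2)/R :=
      setIntegral_nonneg measurableSet_Ioi (fun R hR =>
        div_nonneg (by positivity) (le_of_lt hR))
    rw [hcongr, hsplit, hdBzero]
    linarith
  -- conclude with square roots
  have lhs_eq : 2 * tauh * Real.sqrt lam *
      Real.sqrt (∫ R in Ioi (0:ℝ), (R ^ lam * f R) ^ 2 * R ^ 3)
      = Real.sqrt (4*lam*tauh^2 * ∫ R in Ioi (0:ℝ), (R ^ lam * f R) ^ 2 * R ^ 3) := by
    rw [Real.sqrt_mul (by positivity),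
      show (4*lam*tauh^2) = (2*tauh)^2*lam by ring,
      Real.sqrt_mul (by positivity), Real.sqrt_sq (by positivity)]
  rw [lhs_eq]
  exact Real.sqrt_le_sqrt key
end

section
/- There is an absolute constant C such that for all ξ > 0, all κ > 0, and all a ∈ (0, 1/2), the principal value integral satisfies |p.v. ∫_{-aξ}^{aξ} e^{i(η² + 2ξη)κ} / η dη| ≤ C, where p.v. denotes the limit as ε → 0+ of the integral over {ε ≤ |η| ≤ aξ}. -/
/-!
Pairing `η` with `-η` turns the principal value into the absolutely convergent integral over
`(0, aξ]` of `g(η) = (e^{iφ₊(η)} - e^{iφ₋(η)}) / η`, where `φ± = κη² ± 2ξκη`, and `|g| ≤ 4ξκ`.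
Up to `η = 1/(ξκ)` this gives the bound `4`. Beyond that point each exponential is integrated by
parts against its phase: since `η < ξ/2`, `|η φ±'(η)| ≥ 1`, and as `1/(η φ±'(η))` is monotone, the
boundary terms and the correction term are all bounded by absolute constants.
-/

open MeasureTheory Filter Set Topology intervalIntegral

section PrincipalValue

variable {E : Type*} [NormedAddCommGroup E] [NormedSpace ℝ E]

lemma setOf_le_abs_and_abs_le_eq_union {ε r : ℝ} (hε : 0 ≤ ε) :
    {x : ℝ | ε ≤ |x| ∧ |x| ≤ r} = Icc (-r) (-ε) ∪ Icc ε r := by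
  ext x
  simp only [mem_ofPred_eq, mem_union, mem_Icc, le_abs', abs_le]
  grind

theorem setIntegral_le_abs_and_abs_le_eq_intervalIntegral {f : ℝ → E} {ε r : ℝ}
    (hf : ContinuousOn f {0}ᶜ) (hε : 0 < ε) (hεr : ε ≤ r) :
    ∫ x in {x : ℝ | ε ≤ |x| ∧ |x| ≤ r}, f x = ∫ x in ε..r, (f x + f (-x)) := by
  have hf_left : IntegrableOn f (Icc (-r) (-ε)) :=
    (hf.mono fun x hx hx0 => by simp_all; linarith).integrableOn_Icc
  have hf_right : IntegrableOn f (Icc ε r) :=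
    (hf.mono fun x hx hx0 => by simp_all; linarith).integrableOn_Icc
  have hf_neg : IntervalIntegrable (fun x => f (-x)) volume ε r := by
    refine (hf.comp continuousOn_neg fun x hx hx0 => ?_).intervalIntegrable
    rw [uIcc_of_le hεr] at hx
    simp_all; linarith
  have hdisj : Disjoint (Icc (-r) (-ε)) (Icc ε r) :=
    disjoint_left.mpr fun x h₁ h₂ => by simp only [mem_Icc] at h₁ h₂; linarith
  rw [setOf_le_abs_and_abs_le_eq_union hε.le,
    setIntegral_union hdisj measurableSet_Icc hf_left hf_right,
    intervalIntegral.integral_add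
      ((intervalIntegrable_iff_integrableOn_Icc_of_le hεr).mpr hf_right) hf_neg,
    integral_comp_neg, add_comm, integral_of_le hεr, integral_of_le (by linarith),
    integral_Icc_eq_integral_Ioc, integral_Icc_eq_integral_Ioc]

theorem tendsto_intervalIntegral_left_nhdsGT {g : ℝ → E} {a b : ℝ} (hab : a < b)
    (hg : IntervalIntegrable g volume a b) :
    Tendsto (fun ε => ∫ x in ε..b, g x) (𝓝[>] a) (𝓝 (∫ x in a..b, g x)) := by
  rw [intervalIntegrable_iff_integrableOn_Icc_of_le hab.le, ← uIcc_of_le hab.le] at hg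
  refine (continuousOn_primitive_interval_left hg a left_mem_uIcc).mono_of_mem_nhdsWithin ?_
  rw [uIcc_of_le hab.le]
  exact Icc_mem_nhdsGT hab

end PrincipalValue

section NonstationaryPhase

variable {φ φ' w w' : ℝ → ℝ} {b c : ℝ}

theorem norm_integral_cexp_mul_le (hbc : b ≤ c)
    (hφ : ∀ x ∈ Icc b c, HasDerivAt φ (φ' x) x) (hφ' : ContinuousOn φ' (Icc b c))
    (hw : ∀ x ∈ Icc b c, HasDerivAt w (w' x) x) (hw' : ContinuousOn w' (Icc b c)) :
    ‖∫ x in b..c, Complex.exp (Complex.I * φ x) * (φ' x * w x)‖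
      ≤ |w b| + |w c| + ∫ x in b..c, |w' x| := by
  rw [← uIcc_of_le hbc] at hφ hφ' hw hw'
  set v : ℝ → ℂ := fun x => Complex.exp (Complex.I * φ x)
  have hv_norm (x : ℝ) : ‖v x‖ = 1 := by simp [v, Complex.norm_exp]
  have hv : ∀ x ∈ uIcc b c, HasDerivAt v (Complex.I * φ' x * v x) x := fun x hx =>
    (((hφ x hx).ofReal_comp.const_mul Complex.I).cexp).congr_deriv (by ring)
  have hu : ∀ x ∈ uIcc b c, HasDerivAt (fun x => -Complex.I * w x) (-Complex.I * w' x) x :=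
    fun x hx => (hw x hx).ofReal_comp.const_mul _
  have hv_cont : ContinuousOn v (uIcc b c) :=
    fun x hx => (hv x hx).continuousAt.continuousWithinAt
  have hibp := integral_mul_deriv_eq_deriv_mul hu hv
    (ContinuousOn.intervalIntegrable (by fun_prop)) (ContinuousOn.intervalIntegrable (by fun_prop))
  have hintegrand : ∀ x, Complex.exp (Complex.I * φ x) * (φ' x * w x)
      = (-Complex.I * w x) * (Complex.I * φ' x * v x) := fun x => by
    simp only [v]; ring_nf; rw [Complex.I_sq]; ring
  have hterm (x : ℝ) (y : ℝ) : ‖-Complex.I * (y : ℂ) * v x‖ = |y| := by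
    simp [hv_norm]
  simp_rw [hintegrand, hibp]
  calc _ ≤ ‖-Complex.I * (w c : ℂ) * v c‖ + ‖-Complex.I * (w b : ℂ) * v b‖
        + ‖∫ x in b..c, -Complex.I * (w' x : ℂ) * v x‖ :=
        (norm_sub_le _ _).trans (add_le_add_left (norm_sub_le _ _) _)
    _ ≤ |w c| + |w b| + ∫ x in b..c, |w' x| := by
        rw [hterm, hterm]
        gcongr
        exact (intervalIntegral.norm_integral_le_integral_norm hbc).trans_eq (by simp_rw [hterm])
    _ = _ := by ring

theorem integral_abs_eq_abs_sub_of_hasDerivAt (hbc : b ≤ c)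
    (hw : ∀ x ∈ Icc b c, HasDerivAt w (w' x) x) (hw' : IntervalIntegrable w' volume b c)
    (hsign : (∀ x ∈ Icc b c, 0 ≤ w' x) ∨ ∀ x ∈ Icc b c, w' x ≤ 0) :
    ∫ x in b..c, |w' x| = |w c - w b| := by
  have hftc := integral_eq_sub_of_hasDerivAt (fun x hx => hw x (uIcc_of_le hbc ▸ hx)) hw'
  rcases hsign with hpos | hneg
  · rw [integral_congr fun x hx => abs_of_nonneg (hpos x (uIcc_of_le hbc ▸ hx)), hftc,
      abs_of_nonneg (hftc ▸ integral_nonneg hbc hpos)]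
  · have hsub := integral_nonneg (μ := volume) hbc fun x hx => neg_nonneg.mpr (hneg x hx)
    rw [intervalIntegral.integral_neg, hftc, neg_nonneg] at hsub
    rw [integral_congr fun x hx => abs_of_nonpos (hneg x (uIcc_of_le hbc ▸ hx)),
      intervalIntegral.integral_neg, hftc, abs_of_nonpos hsub]

theorem norm_integral_cexp_mul_le_of_deriv_sign (hbc : b ≤ c)
    (hφ : ∀ x ∈ Icc b c, HasDerivAt φ (φ' x) x) (hφ' : ContinuousOn φ' (Icc b c))
    (hw : ∀ x ∈ Icc b c, HasDerivAt w (w' x) x) (hw' : ContinuousOn w' (Icc b c))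
    (hsign : (∀ x ∈ Icc b c, 0 ≤ w' x) ∨ ∀ x ∈ Icc b c, w' x ≤ 0) :
    ‖∫ x in b..c, Complex.exp (Complex.I * φ x) * (φ' x * w x)‖ ≤ 2 * (|w b| + |w c|) := by
  have hbound := norm_integral_cexp_mul_le hbc hφ hφ' hw hw'
  rw [integral_abs_eq_abs_sub_of_hasDerivAt hbc hw (hw'.intervalIntegrable_of_Icc hbc) hsign]
    at hbound
  linarith [abs_sub (w c) (w b)]

end NonstationaryPhase

lemma norm_cexp_I_mul_sub_cexp_I_mul_le (A B : ℝ) :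
    ‖Complex.exp (Complex.I * A) - Complex.exp (Complex.I * B)‖ ≤ |A - B| := by
  have hfactor : Complex.exp (Complex.I * A) - Complex.exp (Complex.I * B)
      = Complex.exp (Complex.I * B) * (Complex.exp (Complex.I * ((A - B : ℝ) : ℂ)) - 1) := by
    rw [mul_sub, ← Complex.exp_add]; push_cast; ring_nf
  rw [hfactor, norm_mul, Complex.norm_exp_I_mul_ofReal, one_mul]
  exact Real.norm_exp_I_mul_ofReal_sub_one_le

noncomputable def chirp (κ μ η : ℝ) : ℂ := Complex.exp (Complex.I * ((κ * η ^ 2 + μ * η : ℝ) : ℂ))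

section Chirp

variable {κ μ : ℝ}

lemma continuous_chirp : Continuous (chirp κ μ) := by
  unfold chirp; fun_prop

lemma chirp_neg (η : ℝ) : chirp κ μ (-η) = chirp κ (-μ) η := by
  simp only [chirp]; ring_nf

lemma norm_chirp_sub_chirp_neg_div_le (η : ℝ) :
    ‖(chirp κ μ η - chirp κ (-μ) η) / η‖ ≤ 2 * |μ| := by
  rcases eq_or_ne η 0 with rfl | hη
  · simp
  rw [norm_div, Complex.norm_real, Real.norm_eq_abs, div_le_iff₀ (abs_pos.mpr hη)]
  calc _ ≤ |(κ * η ^ 2 + μ * η) - (κ * η ^ 2 + -μ * η)| := norm_cexp_I_mul_sub_cexp_I_mul_le _ _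
    _ = 2 * |μ| * |η| := by rw [← abs_two, ← abs_mul, ← abs_mul]; ring_nf

-- At `η = 0` both sides vanish, by the convention `x / 0 = 0`.
lemma chirp_div_add_chirp_neg_div (η : ℝ) :
    chirp κ μ η / η + chirp κ μ (-η) / ((-η : ℝ) : ℂ) = (chirp κ μ η - chirp κ (-μ) η) / η := by
  rw [chirp_neg, Complex.ofReal_neg, div_neg, ← sub_eq_add_neg, sub_div]

lemma continuousOn_chirp_div : ContinuousOn (fun η : ℝ => chirp κ μ η / η) {0}ᶜ :=
  continuous_chirp.continuousOn.div (by fun_prop) fun _ hη => Complex.ofReal_ne_zero.mpr hη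

lemma intervalIntegrable_chirp_sub_chirp_neg_div (a b : ℝ) :
    IntervalIntegrable (fun η : ℝ => (chirp κ μ η - chirp κ (-μ) η) / η) volume a b :=
  intervalIntegrable_const.mono_fun'
    ((continuous_chirp.sub continuous_chirp).measurable.div
      Complex.measurable_ofReal).aestronglyMeasurable
    (ae_of_all _ norm_chirp_sub_chirp_neg_div_le)

theorem norm_integral_chirp_div_le {b c m : ℝ} (hbc : b ≤ c) (hm : 0 < m)
    (hlow : ∀ η ∈ Icc b c, m ≤ |(2 * κ * η + μ) * η|)
    (hsign : (∀ η ∈ Icc b c, 0 ≤ 4 * κ * η + μ) ∨ ∀ η ∈ Icc b c, 4 * κ * η + μ ≤ 0) :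
    ‖∫ η in b..c, chirp κ μ η / η‖ ≤ 4 / m := by
  set q : ℝ → ℝ := fun η => (2 * κ * η + μ) * η
  have hq_ne : ∀ η ∈ Icc b c, q η ≠ 0 := fun η hη hq0 => by
    have := hlow η hη; simp only [q] at hq0; rw [hq0, abs_zero] at this; linarith
  have hq_inv_le : ∀ η ∈ Icc b c, |(q η)⁻¹| ≤ 1 / m := fun η hη => by
    rw [abs_inv, one_div]; exact inv_anti₀ hm (hlow η hη)
  have hφ (η : ℝ) : HasDerivAt (fun η => κ * η ^ 2 + μ * η) (2 * κ * η + μ) η :=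
    (((hasDerivAt_pow 2 η).const_mul κ).add ((hasDerivAt_id η).const_mul μ)).congr_deriv
      (by simp; ring)
  have hq (η : ℝ) : HasDerivAt q (4 * κ * η + μ) η :=
    ((((hasDerivAt_id η).const_mul (2 * κ)).add_const μ).mul (hasDerivAt_id η)).congr_deriv
      (by simp; ring)
  have hbound := norm_integral_cexp_mul_le_of_deriv_sign hbc (fun η _ => hφ η) (by fun_prop)
    (fun η hη => (hq η).inv (hq_ne η hη))
    (ContinuousOn.div (by fun_prop) (by fun_prop) fun η hη => pow_ne_zero 2 (hq_ne η hη))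
    (hsign.symm.imp (fun h η hη => div_nonneg (neg_nonneg.mpr (h η hη)) (sq_nonneg _))
      (fun h η hη => div_nonpos_of_nonpos_of_nonneg (neg_nonpos.mpr (h η hη)) (sq_nonneg _)))
  have hintegrand : ∫ η in b..c, chirp κ μ η / η = ∫ η in b..c, Complex.exp
      (Complex.I * (κ * η ^ 2 + μ * η : ℝ)) * ((2 * κ * η + μ : ℝ) * ((q η)⁻¹ : ℝ)) := by
    refine intervalIntegral.integral_congr fun η hη => ?_
    have hqη := hq_ne η (uIcc_of_le hbc ▸ hη)
    have hφ'η : ((2 * κ * η + μ : ℝ) : ℂ) ≠ 0 := by exact_mod_cast left_ne_zero_of_mul hqη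
    simp only [chirp, q]
    push_cast at hφ'η ⊢
    rw [mul_inv, mul_inv_cancel_left₀ hφ'η, div_eq_mul_inv]
  rw [hintegrand]
  calc _ ≤ 2 * (|(q b)⁻¹| + |(q c)⁻¹|) := hbound
    _ ≤ 2 * (1 / m + 1 / m) := by
      gcongr <;> apply hq_inv_le <;> simp [hbc]
    _ = 4 / m := by ring

end Chirp

theorem norm_integral_chirp_sub_chirp_neg_div_le {ξ κ r : ℝ} (hξ : 0 < ξ) (hκ : 0 < κ)
    (hr : 0 ≤ r) (hrξ : r < ξ / 2) :
    ‖∫ η in 0..r, (chirp κ (2 * ξ * κ) η - chirp κ (-(2 * ξ * κ)) η) / η‖ ≤ 10 := by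
  set g : ℝ → ℂ := fun η => (chirp κ (2 * ξ * κ) η - chirp κ (-(2 * ξ * κ)) η) / η with hg
  have hnear : ∀ t, 0 ≤ t → t ≤ (ξ * κ)⁻¹ → ‖∫ η in 0..t, g η‖ ≤ 4 := by
    intro t ht htb
    refine (intervalIntegral.norm_integral_le_of_norm_le_const
      fun η _ => norm_chirp_sub_chirp_neg_div_le η).trans ?_
    rw [sub_zero, abs_of_nonneg ht, abs_of_pos (by positivity)]
    calc 2 * (2 * ξ * κ) * t ≤ 2 * (2 * ξ * κ) * (ξ * κ)⁻¹ := by gcongr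
      _ = 4 := by field_simp; ring
  rcases le_or_gt r (ξ * κ)⁻¹ with hsmall | hlarge
  · exact (hnear r hr hsmall).trans (by norm_num)
  set b := (ξ * κ)⁻¹
  have hb : 0 < b := by positivity
  have hξκb : ξ * κ * b = 1 := mul_inv_cancel₀ (by positivity)
  have hξκη : ∀ η ∈ Icc b r, 1 ≤ ξ * κ * η := fun η hη =>
    hξκb ▸ mul_le_mul_of_nonneg_left hη.1 (by positivity)
  have hκη : ∀ η ∈ Icc b r, 0 ≤ κ * η := fun η hη => mul_nonneg hκ.le (hb.le.trans hη.1)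
  have hfar_plus : ‖∫ η in b..r, chirp κ (2 * ξ * κ) η / η‖ ≤ 4 / 2 :=
    norm_integral_chirp_div_le hlarge.le two_pos
      (fun η hη => by
        have := hξκη η hη; have := hκη η hη
        rw [abs_of_nonneg (by nlinarith)]; nlinarith)
      (Or.inl fun η hη => by nlinarith [hξκη η hη, hκη η hη])
  have hfar_minus : ‖∫ η in b..r, chirp κ (-(2 * ξ * κ)) η / η‖ ≤ 4 / 1 :=
    norm_integral_chirp_div_le hlarge.le one_pos
      (fun η hη => by
        have := hξκη η hη
        have := mul_nonneg (hκη η hη) (by linarith [hη.2] : (0 : ℝ) ≤ ξ / 2 - η)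
        rw [abs_of_nonpos (by nlinarith)]; nlinarith)
      (Or.inr fun η hη => by nlinarith [hη.2])
  have hint (μ : ℝ) : IntervalIntegrable (fun η : ℝ => chirp κ μ η / η) volume b r :=
    (continuousOn_chirp_div.mono fun η hη => by
      rw [uIcc_of_le hlarge.le] at hη; exact (hb.trans_le hη.1).ne').intervalIntegrable
  have hfar : ‖∫ η in b..r, g η‖ ≤ 4 / 2 + 4 / 1 := by
    simp only [hg, sub_div]
    rw [intervalIntegral.integral_sub (hint _) (hint _)]
    exact (norm_sub_le _ _).trans (add_le_add hfar_plus hfar_minus)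
  rw [← intervalIntegral.integral_add_adjacent_intervals (b := b)
    (intervalIntegrable_chirp_sub_chirp_neg_div _ _)
    (intervalIntegrable_chirp_sub_chirp_neg_div _ _)]
  calc _ ≤ 4 + (4 / 2 + 4 / 1) :=
        (norm_add_le _ _).trans (add_le_add (hnear b hb.le le_rfl) hfar)
    _ = 10 := by norm_num

/-- There is an absolute constant `C` such that for all `ξ > 0`, `κ > 0` and `a ∈ (0,1/2)`,
the principal value integral `p.v. ∫_{-aξ}^{aξ} e^{i(η²+2ξη)κ}/η dη` exists (as the limit
as `ε → 0+` of the integrals over `{ε ≤ |η| ≤ aξ}`) and is bounded in absolute value by `C`. -/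
theorem pv_oscillatory_integral_bound :
    ∃ C : ℝ, ∀ ξ κ a : ℝ, 0 < ξ → 0 < κ → a ∈ Set.Ioo (0 : ℝ) (1 / 2) →
      ∃ L : ℂ,
        Filter.Tendsto
          (fun ε : ℝ => ∫ η in {η : ℝ | ε ≤ |η| ∧ |η| ≤ a * ξ},
            Complex.exp (Complex.I * (((η ^ 2 + 2 * ξ * η) * κ : ℝ) : ℂ)) / (η : ℂ))
          (nhdsWithin 0 (Set.Ioi 0)) (nhds L)
        ∧ ‖L‖ ≤ C := by
  refine ⟨10, fun ξ κ a hξ hκ ⟨ha, ha'⟩ => ?_⟩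
  have hr : 0 < a * ξ := mul_pos ha hξ
  have hrξ : a * ξ < ξ / 2 := by nlinarith
  have hchirp (η : ℝ) : Complex.exp (Complex.I * (((η ^ 2 + 2 * ξ * η) * κ : ℝ) : ℂ))
      = chirp κ (2 * ξ * κ) η := by
    simp only [chirp]; ring_nf
  simp_rw [hchirp]
  refine ⟨_, ?_, norm_integral_chirp_sub_chirp_neg_div_le hξ hκ hr.le hrξ⟩
  refine (tendsto_intervalIntegral_left_nhdsGT hr
    (intervalIntegrable_chirp_sub_chirp_neg_div _ _)).congr' ?_
  filter_upwards [Ioo_mem_nhdsGT hr] with ε hε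
  simp_rw [setIntegral_le_abs_and_abs_le_eq_intervalIntegral continuousOn_chirp_div hε.1 hε.2.le,
    chirp_div_add_chirp_neg_div]
end

section
/- Let φ(η) = ∫₀^∞ e^{-a - η/a} da for η > 0. Then the function η ↦ φ(η) + φ'(η) has at most one zero on (0,∞). -/
/-!
Differentiating under the integral sign, `φ = phiMoment 0`, `φ' = -phiMoment 1` and
`(phiMoment 1)' = -phiMoment 2`. The strict Cauchy–Schwarz inequality for the weight
`e^{-a - η/a}` and the non-constant function `a ↦ a⁻¹` gives
`(phiMoment 1)² < phiMoment 0 · phiMoment 2`, so the ratio `phiMoment 1 / phiMoment 0 = -φ'/φ`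
is strictly decreasing. The zeros of `φ + φ'` are the points where this ratio equals `1`.
-/

open MeasureTheory Set

noncomputable section

/-- `φ(η) = ∫₀^∞ e^{-a - η/a} da`. -/
def φ (η : ℝ) : ℝ := ∫ a in Set.Ioi (0 : ℝ), Real.exp (-a - η / a)

open Filter

section StrictCauchySchwarz

variable {α : Type*} [MeasurableSpace α] {μ : Measure α}

theorem integral_pos_of_ae_pos {w : α → ℝ} (hμ : μ ≠ 0) (hw : ∀ᵐ x ∂μ, 0 < w x)
    (hw_int : Integrable w μ) : 0 < ∫ x, w x ∂μ := by
  have hw_nonneg : 0 ≤ᵐ[μ] w := hw.mono fun _ hx => hx.le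
  refine (integral_nonneg_of_ae hw_nonneg).lt_of_ne' fun h => hμ ?_
  rw [integral_eq_zero_iff_of_nonneg_ae hw_nonneg hw_int] at h
  rw [← ae_eq_bot, ← eventually_false_iff_eq_bot]
  filter_upwards [hw, h] with x hpos hzero
  exact hpos.ne' hzero

theorem Function.Injective.not_ae_eq_const {β : Type*} [NullSingletonClass μ] (hμ : μ ≠ 0)
    {f : α → β} (hf : Function.Injective f) (c : β) : ¬ f =ᵐ[μ] fun _ => c := by
  intro h
  have hne : ∀ᵐ x ∂μ, f x ≠ c :=
    ae_iff.2 <| by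
      simp only [ne_eq, not_not]
      exact (subsingleton_singleton.preimage hf).measure_zero μ
  have := ae_neBot.2 hμ
  obtain ⟨x, hx, hx'⟩ := (h.and hne).exists
  exact hx' hx

theorem sq_integral_mul_lt_integral_mul_integral {w f : α → ℝ} (hw : ∀ᵐ x ∂μ, 0 < w x)
    (hf : ∀ c, ¬ f =ᵐ[μ] fun _ => c) (hw_int : Integrable w μ)
    (hwf : Integrable (fun x => w x * f x) μ) (hwf2 : Integrable (fun x => w x * f x ^ 2) μ) :
    (∫ x, w x * f x ∂μ) ^ 2 < (∫ x, w x ∂μ) * ∫ x, w x * f x ^ 2 ∂μ := by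
  have hμ : μ ≠ 0 := fun h => hf 0 (by simp [h, EventuallyEq])
  set W := ∫ x, w x ∂μ
  set A := ∫ x, w x * f x ∂μ
  set B := ∫ x, w x * f x ^ 2 ∂μ
  have hW : 0 < W := integral_pos_of_ae_pos hμ hw hw_int
  set m := A / W
  have hexpand : (fun x => w x * (f x - m) ^ 2)
      = fun x => w x * f x ^ 2 - 2 * m * (w x * f x) + m ^ 2 * w x := by
    funext x; ring
  have hint₁ : Integrable (fun x => w x * f x ^ 2 - 2 * m * (w x * f x)) μ :=
    hwf2.sub (hwf.const_mul _)
  have hint₂ : Integrable (fun x => m ^ 2 * w x) μ := hw_int.const_mul _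
  have hvar : ∫ x, w x * (f x - m) ^ 2 ∂μ = B - 2 * m * A + m ^ 2 * W := by
    rw [hexpand, integral_add hint₁ hint₂, integral_sub hwf2 (hwf.const_mul _),
      integral_const_mul, integral_const_mul]
  have hvar_pos : 0 < ∫ x, w x * (f x - m) ^ 2 ∂μ := by
    have hnonneg : 0 ≤ᵐ[μ] fun x => w x * (f x - m) ^ 2 :=
      hw.mono fun x hx => mul_nonneg hx.le (sq_nonneg _)
    refine (integral_nonneg_of_ae hnonneg).lt_of_ne' fun h => hf m ?_
    rw [integral_eq_zero_iff_of_nonneg_ae hnonneg (hexpand ▸ hint₁.add hint₂)] at h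
    filter_upwards [hw, h] with x hwx hx
    simpa [hwx.ne', sub_eq_zero] using hx
  have hA : A = m * W := (div_mul_cancel₀ _ hW.ne').symm
  rw [hvar, hA] at hvar_pos
  rw [hA]
  nlinarith [mul_pos hW hvar_pos]

end StrictCauchySchwarz

def phiMoment (n : ℕ) (η : ℝ) : ℝ := ∫ a in Ioi (0 : ℝ), Real.exp (-a - η / a) * a⁻¹ ^ n

theorem φ_eq_phiMoment_zero : φ = phiMoment 0 := by
  funext η
  simp only [φ, phiMoment, pow_zero, mul_one]

theorem measurable_phiMoment_integrand (n : ℕ) (η : ℝ) :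
    Measurable fun a : ℝ => Real.exp (-a - η / a) * a⁻¹ ^ n := by
  fun_prop

theorem exp_neg_sub_div_mul_inv_pow_le {η a : ℝ} (hη : 0 < η) (ha : 0 < a) (n : ℕ) :
    Real.exp (-a - η / a) * a⁻¹ ^ n ≤ n.factorial / η ^ n * Real.exp (-a) := by
  have hpow : (η / a) ^ n ≤ n.factorial * Real.exp (η / a) := by
    have := Real.pow_div_factorial_le_exp _ (div_nonneg hη.le ha.le) n
    rwa [div_le_iff₀ (by positivity), mul_comm] at this
  have hsplit : Real.exp (-a - η / a) * a⁻¹ ^ n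
      = Real.exp (-a) * (η / a) ^ n / (Real.exp (η / a) * η ^ n) := by
    simp only [sub_eq_add_neg, Real.exp_add, Real.exp_neg, div_pow, inv_pow]
    field_simp
  rw [hsplit, div_le_iff₀ (by positivity)]
  calc Real.exp (-a) * (η / a) ^ n ≤ Real.exp (-a) * (n.factorial * Real.exp (η / a)) := by
        gcongr
    _ = n.factorial / η ^ n * Real.exp (-a) * (Real.exp (η / a) * η ^ n) := by
        field_simp

theorem integrableOn_phiMoment_integrand {η : ℝ} (hη : 0 < η) (n : ℕ) :
    IntegrableOn (fun a => Real.exp (-a - η / a) * a⁻¹ ^ n) (Ioi 0) := by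
  have hexp : IntegrableOn (fun a => Real.exp (-a)) (Ioi (0 : ℝ)) := by
    simpa using exp_neg_integrableOn_Ioi 0 one_pos
  refine Integrable.mono' (hexp.const_mul (n.factorial / η ^ n))
    (measurable_phiMoment_integrand n η).aestronglyMeasurable ?_
  filter_upwards [ae_restrict_mem measurableSet_Ioi] with a (ha : 0 < a)
  rw [Real.norm_of_nonneg (by positivity)]
  exact exp_neg_sub_div_mul_inv_pow_le hη ha n

theorem phiMoment_pos {η : ℝ} (hη : 0 < η) (n : ℕ) : 0 < phiMoment n η := by
  refine integral_pos_of_ae_pos (by simp [Measure.restrict_eq_zero]) ?_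
    (integrableOn_phiMoment_integrand hη n)
  filter_upwards [ae_restrict_mem measurableSet_Ioi] with a (ha : 0 < a)
  positivity

theorem hasDerivAt_phiMoment {η : ℝ} (hη : 0 < η) (n : ℕ) :
    HasDerivAt (phiMoment n) (-phiMoment (n + 1) η) η := by
  have hderiv (a x : ℝ) : HasDerivAt (fun x => Real.exp (-a - x / a) * a⁻¹ ^ n)
      (-(Real.exp (-a - x / a) * a⁻¹ ^ (n + 1))) x :=
    ((((hasDerivAt_id' x).div_const a).const_sub (-a)).exp.mul_const (a⁻¹ ^ n)).congr_deriv
      (by ring)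
  -- `exp (-a - x / a)` decreases in `x`, so the integrand at `η / 2` dominates on `x > η / 2`
  have key := hasDerivAt_integral_of_dominated_loc_of_deriv_le (μ := volume.restrict (Ioi 0))
    (bound := fun a => Real.exp (-a - η / 2 / a) * a⁻¹ ^ (n + 1))
    (Ioi_mem_nhds (half_lt_self hη))
    (Eventually.of_forall fun x => (measurable_phiMoment_integrand n x).aestronglyMeasurable)
    (integrableOn_phiMoment_integrand hη n)
    (measurable_phiMoment_integrand (n + 1) η).neg.aestronglyMeasurable ?_
    (integrableOn_phiMoment_integrand (half_pos hη) (n + 1))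
    (Eventually.of_forall fun a x _ => hderiv a x)
  · have h := key.2
    rwa [integral_neg] at h
  · filter_upwards [ae_restrict_mem measurableSet_Ioi] with a (ha : 0 < a) x (hx : η / 2 < x)
    rw [norm_neg, Real.norm_of_nonneg (by positivity)]
    gcongr

theorem phiMoment_succ_sq_lt {η : ℝ} (hη : 0 < η) (n : ℕ) :
    phiMoment (n + 1) η ^ 2 < phiMoment n η * phiMoment (n + 2) η := by
  set w := fun a : ℝ => Real.exp (-a - η / a) * a⁻¹ ^ n
  have hsucc : ∀ k, (fun a : ℝ => Real.exp (-a - η / a) * a⁻¹ ^ (n + k))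
      = fun a => w a * a⁻¹ ^ k := fun k => by funext a; simp only [w, pow_add, mul_assoc]
  have hμ : volume.restrict (Ioi (0 : ℝ)) ≠ 0 := by simp [Measure.restrict_eq_zero]
  have h := sq_integral_mul_lt_integral_mul_integral (μ := volume.restrict (Ioi 0)) (w := w)
    (f := fun a => a⁻¹) ?_ (inv_injective.not_ae_eq_const hμ)
    (integrableOn_phiMoment_integrand hη n) ?_ ?_
  · simpa only [phiMoment, hsucc, pow_one] using h
  · filter_upwards [ae_restrict_mem measurableSet_Ioi] with a (ha : 0 < a)
    positivity
  · have hint := integrableOn_phiMoment_integrand hη (n + 1)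
    rw [hsucc 1] at hint
    simp only [pow_one] at hint
    exact hint
  · have hint := integrableOn_phiMoment_integrand hη (n + 2)
    rw [hsucc 2] at hint
    exact hint

theorem strictAntiOn_phiMoment_succ_div (n : ℕ) :
    StrictAntiOn (fun η => phiMoment (n + 1) η / phiMoment n η) (Ioi 0) := by
  have hderiv {η : ℝ} (hη : 0 < η) := (hasDerivAt_phiMoment hη (n + 1)).fun_div
    (hasDerivAt_phiMoment hη n) (phiMoment_pos hη n).ne'
  refine strictAntiOn_of_deriv_neg (convex_Ioi 0)
    (fun η hη => (hderiv hη).continuousAt.continuousWithinAt) fun η hη => ?_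
  rw [interior_Ioi] at hη
  rw [(hderiv hη).deriv]
  exact div_neg_of_neg_of_pos (by linarith [phiMoment_succ_sq_lt hη n])
    (pow_pos (phiMoment_pos hη n) 2)

/-- The function `η ↦ φ(η) + φ'(η)` has at most one zero on `(0,∞)`. -/
theorem phi_plus_phi'_at_most_one_zero :
    ∀ η₁ ∈ Set.Ioi (0 : ℝ), ∀ η₂ ∈ Set.Ioi (0 : ℝ),
      φ η₁ + deriv φ η₁ = 0 → φ η₂ + deriv φ η₂ = 0 → η₁ = η₂ := by
  intro η₁ h₁ η₂ h₂ e₁ e₂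
  have ratio_eq_one {η : ℝ} (hη : 0 < η) (he : φ η + deriv φ η = 0) :
      phiMoment 1 η / phiMoment 0 η = 1 := by
    rw [φ_eq_phiMoment_zero, (hasDerivAt_phiMoment hη 0).deriv] at he
    rw [div_eq_one_iff_eq (phiMoment_pos hη 0).ne']
    linarith
  exact (strictAntiOn_phiMoment_succ_div 0).injOn h₁ h₂
    ((ratio_eq_one h₁ e₁).trans (ratio_eq_one h₂ e₂).symm)
end
end
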